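/- arXiv:0712.0144 — 2 statements merged into one kernel-verified Lean document; each statement's English description precedes it below -/
import Mathlib

section
/- If {b₁, b₂} is a Z-basis of Z², then the Virasoro-like algebra L is generated as a Lie algebra by the three elements D(b₁), D(b₂), D(-b₁-b₂). -/
/-! Since `det(m, n) ≠ 0` forces `m + n ≠ 0`, the bracket relation gives `D(m + n)` as a
nonzero multiple of `⁅D m, D n⁆`; so the set of `m` with `D m` in a Lie subalgebra is closed
under adding vectors with nonzero determinant. In coordinates with respect to `b₁, b₂` (a change
of basis only rescales determinants by `det(b₁, b₂) ≠ 0`), one reaches every nonzero lattice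
point from `(1,0)`, `(0,1)`, `(-1,-1)` by walking along lines `m + ℤv`, on which `det(·, v)` is
constant. Finally `c₁ = ⁅D(1,0), D(-1,0)⁆` and `c₂ = ⁅D(0,1), D(0,-1)⁆`. -/

/-- `det(m,n) = m₁n₂ - m₂n₁`. -/
def detZ (m n : ℤ × ℤ) : ℤ := m.1 * n.2 - m.2 * n.1

lemma detZ_self_neg (m : ℤ × ℤ) : detZ m (-m) = 0 := by
  simp only [detZ, Prod.fst_neg, Prod.snd_neg]
  ring

lemma detZ_add_zsmul_left (m v : ℤ × ℤ) (k : ℤ) : detZ (m + k • v) v = detZ m v := by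
  simp only [detZ, Prod.fst_add, Prod.snd_add, Prod.smul_fst, Prod.smul_snd, smul_eq_mul]
  ring

lemma detZ_neg_right (m v : ℤ × ℤ) : detZ m (-v) = -detZ m v := by
  simp only [detZ, Prod.fst_neg, Prod.snd_neg]
  ring

lemma detZ_smul_add_smul (b₁ b₂ p q : ℤ × ℤ) :
    detZ (p.1 • b₁ + p.2 • b₂) (q.1 • b₁ + q.2 • b₂) = detZ p q * detZ b₁ b₂ := by
  simp only [detZ, Prod.fst_add, Prod.snd_add, Prod.smul_fst, Prod.smul_snd, smul_eq_mul]
  ring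

lemma add_ne_zero_of_detZ_ne_zero {m n : ℤ × ℤ} (h : detZ m n ≠ 0) : m + n ≠ 0 := by
  intro hmn
  rw [eq_neg_of_add_eq_zero_right hmn, detZ_self_neg] at h
  exact h rfl

def DetAddClosed (T : Set (ℤ × ℤ)) : Prop :=
  ∀ m ∈ T, ∀ n ∈ T, detZ m n ≠ 0 → m + n ∈ T

namespace DetAddClosed

variable {T : Set (ℤ × ℤ)} (hT : DetAddClosed T)
include hT

lemma add_zsmul_mem {m v : ℤ × ℤ} (hm : m ∈ T) (hv : v ∈ T) (hnv : -v ∈ T)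
    (hdet : detZ m v ≠ 0) (k : ℤ) : m + k • v ∈ T := by
  induction k using Int.induction_on with
  | zero => simpa using hm
  | succ i ih =>
    rw [add_smul, one_smul, ← add_assoc]
    exact hT _ ih _ hv (by rwa [detZ_add_zsmul_left])
  | pred i ih =>
    rw [sub_smul, one_smul, ← add_sub_assoc, sub_eq_add_neg]
    exact hT _ ih _ hnv (by rwa [detZ_neg_right, detZ_add_zsmul_left, neg_ne_zero])

lemma mem_of_ne_zero (h₁₀ : ((1, 0) : ℤ × ℤ) ∈ T) (h₀₁ : ((0, 1) : ℤ × ℤ) ∈ T)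
    (hneg₁₁ : ((-1, -1) : ℤ × ℤ) ∈ T) {m : ℤ × ℤ} (hm : m ≠ 0) : m ∈ T := by
  have hneg₁₀ : -((1, 0) : ℤ × ℤ) ∈ T := by
    simpa using hT _ h₀₁ _ hneg₁₁ (by decide)
  have hneg₀₁ : -((0, 1) : ℤ × ℤ) ∈ T := by
    simpa using hT _ h₁₀ _ hneg₁₁ (by decide)
  have hrow₁ (a : ℤ) : ((a, 1) : ℤ × ℤ) ∈ T := by
    simpa using hT.add_zsmul_mem h₀₁ h₁₀ hneg₁₀ (by decide) a
  have hcol {a : ℤ} (ha : a ≠ 0) (b : ℤ) : ((a, b) : ℤ × ℤ) ∈ T := by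
    simpa using hT.add_zsmul_mem (hrow₁ a) h₀₁ hneg₀₁ (by simpa [detZ] using ha) (b - 1)
  obtain ⟨a, b⟩ := m
  by_cases ha : a = 0
  · subst ha
    have hb : b ≠ 0 := by simpa using hm
    simpa using
      hT.add_zsmul_mem (hcol one_ne_zero b) h₁₀ hneg₁₀ (by simpa [detZ] using hb) (-1)
  · exact hcol ha b

lemma preimage_smul_add_smul {b₁ b₂ : ℤ × ℤ} (hb : detZ b₁ b₂ ≠ 0) :
    DetAddClosed {p | p.1 • b₁ + p.2 • b₂ ∈ T} := by
  intro p hp q hq hpq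
  have hsum : (p + q).1 • b₁ + (p + q).2 • b₂ =
      (p.1 • b₁ + p.2 • b₂) + (q.1 • b₁ + q.2 • b₂) := by
    simp only [Prod.fst_add, Prod.snd_add, add_smul]
    abel
  show _ ∈ T
  rw [hsum]
  exact hT _ hp _ hq (by rw [detZ_smul_add_smul]; exact mul_ne_zero hpq hb)

end DetAddClosed

lemma detAddClosed_setOf_mem_lieSubalgebra {K L : Type*} [Field K] [CharZero K] [LieRing L]
    [LieAlgebra K L] (D : ℤ × ℤ → L)
    (hbr : ∀ m n : ℤ × ℤ, m + n ≠ 0 → ⁅D m, D n⁆ = (-(detZ m n : K)) • D (m + n))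
    (S : LieSubalgebra K L) : DetAddClosed {m | D m ∈ S} := by
  intro m hm n hn hdet
  have hK : (-(detZ m n : K)) ≠ 0 := by simpa using hdet
  have hD : D (m + n) = (-(detZ m n : K))⁻¹ • ⁅D m, D n⁆ := by
    rw [hbr m n (add_ne_zero_of_detZ_ne_zero hdet), inv_smul_smul₀ hK]
  show _ ∈ S
  rw [hD]
  exact S.smul_mem _ (S.lie_mem hm hn)

lemma exists_smul_add_smul_eq_of_span_eq_top {b₁ b₂ : ℤ × ℤ}
    (hbasis : Submodule.span ℤ ({b₁, b₂} : Set (ℤ × ℤ)) = ⊤) (m : ℤ × ℤ) :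
    ∃ a b : ℤ, a • b₁ + b • b₂ = m :=
  Submodule.mem_span_pair.1 (hbasis ▸ Submodule.mem_top)

lemma detZ_ne_zero_of_span_eq_top {b₁ b₂ : ℤ × ℤ}
    (hbasis : Submodule.span ℤ ({b₁, b₂} : Set (ℤ × ℤ)) = ⊤) : detZ b₁ b₂ ≠ 0 := by
  obtain ⟨p, q, hpq⟩ := exists_smul_add_smul_eq_of_span_eq_top hbasis (1, 0)
  obtain ⟨r, s, hrs⟩ := exists_smul_add_smul_eq_of_span_eq_top hbasis (0, 1)
  have h : detZ (p, q) (r, s) * detZ b₁ b₂ = 1 := by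
    rw [← detZ_smul_add_smul, hpq, hrs]
    rfl
  exact right_ne_zero_of_mul_eq_one h

theorem stmt2_general (L : Type*) [LieRing L] [LieAlgebra ℂ L]
    (D : ℤ × ℤ → L) (c₁ c₂ : L)
    (hD0 : D 0 = 0)
    (hbr : ∀ m n : ℤ × ℤ, ⁅D m, D n⁆ =
      (-(detZ m n : ℂ)) • D (m + n)
        + (if m + n = 0 then (m.1 : ℂ) • c₁ + (m.2 : ℂ) • c₂ else 0))
    (hspan : Submodule.span ℂ (Set.range D ∪ {c₁, c₂}) = ⊤)
    (b₁ b₂ : ℤ × ℤ) (hbasis : Submodule.span ℤ ({b₁, b₂} : Set (ℤ × ℤ)) = ⊤) :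
    LieSubalgebra.lieSpan ℂ L {D b₁, D b₂, D (-b₁ - b₂)} = ⊤ := by
  set S := LieSubalgebra.lieSpan ℂ L {D b₁, D b₂, D (-b₁ - b₂)}
  have hT : DetAddClosed {p : ℤ × ℤ | D (p.1 • b₁ + p.2 • b₂) ∈ S} :=
    (detAddClosed_setOf_mem_lieSubalgebra D (fun m n h => by simpa [h] using hbr m n) S)
      |>.preimage_smul_add_smul (detZ_ne_zero_of_span_eq_top hbasis)
  have hgen : ∀ x ∈ ({D b₁, D b₂, D (-b₁ - b₂)} : Set L), x ∈ S :=
    fun _ hx => LieSubalgebra.subset_lieSpan hx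
  have hDS (m : ℤ × ℤ) : D m ∈ S := by
    obtain ⟨a, b, rfl⟩ := exists_smul_add_smul_eq_of_span_eq_top hbasis m
    by_cases hab : ((a, b) : ℤ × ℤ) = 0
    · simp only [Prod.mk_eq_zero] at hab
      simp [hab, hD0, S.zero_mem]
    · refine hT.mem_of_ne_zero ?_ ?_ ?_ hab <;> simp [hgen, sub_eq_add_neg, add_comm]
  have hcS (m : ℤ × ℤ) : (m.1 : ℂ) • c₁ + (m.2 : ℂ) • c₂ ∈ S := by
    have h := S.lie_mem (hDS m) (hDS (-m))
    simpa [hbr, detZ_self_neg] using h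
  have hc₁S : c₁ ∈ S := by simpa using hcS (1, 0)
  have hc₂S : c₂ ∈ S := by simpa using hcS (0, 1)
  rw [eq_top_iff, ← LieSubalgebra.toSubmodule_le_toSubmodule, LieSubalgebra.top_toSubmodule,
    ← hspan, Submodule.span_le]
  rintro x (⟨m, rfl⟩ | rfl | rfl)
  exacts [hDS m, hc₁S, hc₂S]

/-- If `{b₁, b₂}` is a `ℤ`-basis of `ℤ²`, then the Virasoro-like algebra `L` (any Lie algebra
spanned by elements `D(m)`, `c₁`, `c₂` satisfying the defining relations) is generated as a
Lie algebra by the three elements `D(b₁)`, `D(b₂)`, `D(-b₁-b₂)`. -/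
theorem stmt2 (L : Type*) [LieRing L] [LieAlgebra ℂ L]
    (D : ℤ × ℤ → L) (c₁ c₂ : L)
    (hD0 : D 0 = 0)
    (hc₁ : ∀ x : L, ⁅c₁, x⁆ = 0) (hc₂ : ∀ x : L, ⁅c₂, x⁆ = 0)
    (hbr : ∀ m n : ℤ × ℤ, ⁅D m, D n⁆ =
      (-(detZ m n : ℂ)) • D (m + n)
        + (if m + n = 0 then (m.1 : ℂ) • c₁ + (m.2 : ℂ) • c₂ else 0))
    (hspan : Submodule.span ℂ (Set.range D ∪ {c₁, c₂}) = ⊤)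
    (b₁ b₂ : ℤ × ℤ) (hbasis : Submodule.span ℤ ({b₁, b₂} : Set (ℤ × ℤ)) = ⊤) :
    LieSubalgebra.lieSpan ℂ L {D b₁, D b₂, D (-b₁ - b₂)} = ⊤ :=
  stmt2_general L D c₁ c₂ hD0 hbr hspan b₁ b₂ hbasis
end

section
/- Let V be a nontrivial irreducible Z-graded module of the intermediate series (all homogeneous components of dimension ≤ 1) over the Virasoro-like algebra L. If there exists i and 0 ≠ v_i ∈ V_i with D(b₁)·v_i = 0, then D(b₁ + b₂)·v_i = 0 as well, and hence v_i is annihilated by D(b₁) and D(b₁+b₂); since {b₁, b₁+b₂} is a Z-basis of Z², V is a generalized highest weight module. -/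
open Submodule

theorem detZ_smul_add_smul_s18 (a b : ℤ × ℤ) (c d e f : ℤ) :
    detZ (c • a + d • b) (e • a + f • b) = (c * f - d * e) * detZ a b := by
  simp only [detZ, Prod.fst_add, Prod.snd_add, Prod.smul_fst, Prod.smul_snd, smul_eq_mul]
  ring

theorem detZ_smul_add_smul_right (a b : ℤ × ℤ) (c d : ℤ) :
    detZ a (c • a + d • b) = d * detZ a b := by
  simpa using detZ_smul_add_smul_s18 a b 1 0 c d

theorem detZ_smul_add_smul_left (a b : ℤ × ℤ) (c d : ℤ) :
    detZ b (c • a + d • b) = -c * detZ a b := by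
  simpa using detZ_smul_add_smul_s18 a b 0 1 c d

theorem detZ_ne_zero_of_span_eq_top_s18 {a b : ℤ × ℤ} (h : span ℤ {a, b} = ⊤) : detZ a b ≠ 0 := by
  obtain ⟨x, y, hxy⟩ := mem_span_pair.mp (h ▸ mem_top : ((1, 0) : ℤ × ℤ) ∈ span ℤ {a, b})
  obtain ⟨z, w, hzw⟩ := mem_span_pair.mp (h ▸ mem_top : ((0, 1) : ℤ × ℤ) ∈ span ℤ {a, b})
  have hdet := detZ_smul_add_smul_s18 a b x y z w
  rw [hxy, hzw] at hdet
  intro h0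
  rw [h0, mul_zero] at hdet
  simp [detZ] at hdet

theorem smul_add_smul_ne_zero_of_detZ_ne_zero {a b : ℤ × ℤ} (h : detZ a b ≠ 0) (c : ℤ)
    {d : ℤ} (hd : d ≠ 0) : c • a + d • b ≠ 0 := by
  intro h0
  have hdet := detZ_smul_add_smul_right a b c d
  rw [h0, show detZ a 0 = 0 by simp [detZ]] at hdet
  exact mul_ne_zero hd h hdet.symm

theorem span_pair_add_left_eq (a b : ℤ × ℤ) : span ℤ {a, a + b} = span ℤ {a, b} := by
  ext u
  simp_rw [mem_span_pair]
  constructor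
  · rintro ⟨x, y, rfl⟩
    exact ⟨x + y, y, by module⟩
  · rintro ⟨x, y, rfl⟩
    exact ⟨x - y, y, by module⟩

theorem Submodule.exists_smul_eq_of_rank_le_one {K V : Type*} [Field K] [AddCommGroup V]
    [Module K V] {W : Submodule K V} (hW : Module.rank K W ≤ 1) {v w : V} (hv : v ∈ W)
    (hv0 : v ≠ 0) (hw : w ∈ W) : ∃ c : K, w = c • v := by
  obtain ⟨v₀, hv₀⟩ := rank_le_one_iff.mp hW
  obtain ⟨r, hr⟩ := hv₀ ⟨v, hv⟩
  obtain ⟨s, hs⟩ := hv₀ ⟨w, hw⟩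
  have hrv : r • (v₀ : V) = v := congrArg Subtype.val hr
  have hsw : s • (v₀ : V) = w := congrArg Subtype.val hs
  have hr0 : r ≠ 0 := by
    rintro rfl
    exact hv0 (by simpa using hrv.symm)
  exact ⟨s / r, by rw [← hrv, ← hsw, smul_smul, div_mul_cancel₀ _ hr0]⟩

section VirasoroLike

variable {K V : Type*} [Field K] [AddCommGroup V] [Module K V]

def IsVirasoroLikeRep (ρ : ℤ × ℤ → Module.End K V) (κ₁ κ₂ : K) : Prop :=
  ∀ m n : ℤ × ℤ, ρ m * ρ n - ρ n * ρ m =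
    (-(detZ m n : K)) • ρ (m + n)
      + (if m + n = 0 then ((m.1 : K) * κ₁ + (m.2 : K) * κ₂) • (1 : Module.End K V) else 0)

variable [CharZero K] {ρ : ℤ × ℤ → Module.End K V} {κ₁ κ₂ : K}

theorem IsVirasoroLikeRep.apply_add_eq_zero (hρ : IsVirasoroLikeRep ρ κ₁ κ₂) {a b : ℤ × ℤ}
    (hdet : detZ a b ≠ 0) (hab : a + b ≠ 0) {v : V} (ha : ρ a v = 0) {μ : K}
    (hb : ρ b v = μ • v) : ρ (a + b) v = 0 := by
  have h := LinearMap.congr_fun (hρ a b) v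
  simp only [if_neg hab, add_zero, LinearMap.sub_apply, Module.End.mul_apply,
    LinearMap.smul_apply, ha, hb, map_zero, map_smul, smul_zero, sub_zero] at h
  simpa [hdet] using h.symm

theorem IsVirasoroLikeRep.apply_smul_add_smul_eq_zero (hρ : IsVirasoroLikeRep ρ κ₁ κ₂)
    {a b : ℤ × ℤ} (hdet : detZ a b ≠ 0) {v : V} (ha : ρ a v = 0) (hb : ρ b v = 0)
    {m₁ m₂ : ℤ} (hm₁ : 1 ≤ m₁) (hm₂ : 1 ≤ m₂) : ρ (m₁ • a + m₂ • b) v = 0 := by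
  have add_eq_zero {x y : ℤ × ℤ} (hdet : detZ x y ≠ 0) (hxy : x + y ≠ 0) (hx : ρ x v = 0)
      (hy : ρ y v = 0) : ρ (x + y) v = 0 :=
    hρ.apply_add_eq_zero hdet hxy hx (μ := 0) (by rw [hy, zero_smul])
  have hab : a + b ≠ 0 := by
    simpa using smul_add_smul_ne_zero_of_detZ_ne_zero hdet 1 one_ne_zero
  induction m₂, hm₂ using Int.leInduction with
  | base =>
    induction m₁, hm₁ using Int.leInduction with
    | base => simpa using add_eq_zero hdet hab ha hb
    | succ k _ ih =>
      have hne := smul_add_smul_ne_zero_of_detZ_ne_zero hdet (k + 1) one_ne_zero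
      rw [show (k + 1) • a + (1 : ℤ) • b = a + (k • a + (1 : ℤ) • b) by module] at hne ⊢
      exact add_eq_zero (by rwa [detZ_smul_add_smul_right, one_mul]) hne ha ih
  | succ l _ ih =>
    have hne := smul_add_smul_ne_zero_of_detZ_ne_zero hdet m₁ (show l + 1 ≠ 0 by omega)
    rw [show m₁ • a + (l + 1) • b = b + (m₁ • a + l • b) by module] at hne ⊢
    exact add_eq_zero (by rw [detZ_smul_add_smul_left]; exact mul_ne_zero (by omega) hdet)
      hne hb ih

end VirasoroLike

theorem stmt18_general (V : Type*) [AddCommGroup V] [Module ℂ V]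
    (ρ : ℤ × ℤ → Module.End ℂ V) (κ₁ κ₂ : ℂ)
    (hbr : ∀ m n : ℤ × ℤ, ρ m * ρ n - ρ n * ρ m =
      (-(detZ m n : ℂ)) • ρ (m + n)
        + (if m + n = 0 then ((m.1 : ℂ) * κ₁ + (m.2 : ℂ) * κ₂) • (1 : Module.End ℂ V)
           else 0))
    (b₁ b₂ : ℤ × ℤ) (hbasis : Submodule.span ℤ ({b₁, b₂} : Set (ℤ × ℤ)) = ⊤)
    (Vg : ℤ → Submodule ℂ V)
    (hgrade : ∀ (j m n : ℤ), ∀ w ∈ Vg n, ρ (j • b₁ + m • b₂) w ∈ Vg (j + n))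
    (hdim : ∀ i : ℤ, Module.rank ℂ (Vg i) ≤ 1)
    (i : ℤ) (v : V) (hvmem : v ∈ Vg i) (hv : v ≠ 0) (h1 : ρ b₁ v = 0) :
    ρ (b₁ + b₂) v = 0 ∧
    ∃ b₁' b₂' : ℤ × ℤ, Submodule.span ℤ ({b₁', b₂'} : Set (ℤ × ℤ)) = ⊤ ∧
      ∀ m₁ m₂ : ℤ, 1 ≤ m₁ → 1 ≤ m₂ → ρ (m₁ • b₁' + m₂ • b₂') v = 0 := by
  have hρ : IsVirasoroLikeRep ρ κ₁ κ₂ := hbr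
  have hdet := detZ_ne_zero_of_span_eq_top_s18 hbasis
  have hb₂v : ρ b₂ v ∈ Vg i := by simpa using hgrade 0 1 i v hvmem
  obtain ⟨μ, hμ⟩ := exists_smul_eq_of_rank_le_one (hdim i) hvmem hv hb₂v
  have hsum : b₁ + b₂ ≠ 0 := by
    simpa using smul_add_smul_ne_zero_of_detZ_ne_zero hdet 1 one_ne_zero
  have h2 : ρ (b₁ + b₂) v = 0 := hρ.apply_add_eq_zero hdet hsum h1 hμ
  refine ⟨h2, b₁, b₁ + b₂, by rw [span_pair_add_left_eq, hbasis], fun m₁ m₂ hm₁ hm₂ ↦ ?_⟩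
  have hdet' : detZ b₁ (b₁ + b₂) ≠ 0 := by
    convert hdet using 1
    simpa using detZ_smul_add_smul_right b₁ b₂ 1 1
  exact hρ.apply_smul_add_smul_eq_zero hdet' h1 h2 hm₁ hm₂

/-- Let `V` be a nontrivial irreducible `ℤ`-graded module of the intermediate series
(`dim V_i ≤ 1`) over the Virasoro-like algebra (operators `ρ(m)` satisfying the defining
relations with centers acting as scalars `κ₁, κ₂`, grading relative to a `ℤ`-basis
`{b₁, b₂}`). If some nonzero `v ∈ V_i` satisfies `D(b₁)·v = 0`, then also
`D(b₁+b₂)·v = 0`; since `{b₁, b₁+b₂}` is a `ℤ`-basis, `v` is a generalized highest weight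
vector: there is a `ℤ`-basis `{b'₁, b'₂}` with `D(m₁b'₁+m₂b'₂)·v = 0` for all
`m₁, m₂ ≥ 1`, so `V` is a generalized highest weight module. -/
theorem stmt18 (V : Type*) [AddCommGroup V] [Module ℂ V]
    (ρ : ℤ × ℤ → Module.End ℂ V) (κ₁ κ₂ : ℂ)
    (hρ0 : ρ 0 = 0)
    (hbr : ∀ m n : ℤ × ℤ, ρ m * ρ n - ρ n * ρ m =
      (-(detZ m n : ℂ)) • ρ (m + n)
        + (if m + n = 0 then ((m.1 : ℂ) * κ₁ + (m.2 : ℂ) * κ₂) • (1 : Module.End ℂ V)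
           else 0))
    (b₁ b₂ : ℤ × ℤ) (hbasis : Submodule.span ℤ ({b₁, b₂} : Set (ℤ × ℤ)) = ⊤)
    (Vg : ℤ → Submodule ℂ V) (hV : DirectSum.IsInternal Vg)
    (hgrade : ∀ (j m n : ℤ), ∀ w ∈ Vg n, ρ (j • b₁ + m • b₂) w ∈ Vg (j + n))
    (hdim : ∀ i : ℤ, Module.rank ℂ (Vg i) ≤ 1)
    (i : ℤ) (v : V) (hvmem : v ∈ Vg i) (hv : v ≠ 0) (h1 : ρ b₁ v = 0) :
    ρ (b₁ + b₂) v = 0 ∧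
    ∃ b₁' b₂' : ℤ × ℤ, Submodule.span ℤ ({b₁', b₂'} : Set (ℤ × ℤ)) = ⊤ ∧
      ∀ m₁ m₂ : ℤ, 1 ≤ m₁ → 1 ≤ m₂ → ρ (m₁ • b₁' + m₂ • b₂') v = 0 :=
  stmt18_general V ρ κ₁ κ₂ hbr b₁ b₂ hbasis Vg hgrade hdim i v hvmem hv h1
end
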